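/- arXiv:1910.08059 — 5 statements merged into one kernel-verified Lean document; each statement's English description precedes it below -/
import Mathlib

section
/- Let u : ℝ^m → ℝ^n be a 1-Lipschitz map (with respect to Euclidean norms) satisfying u(0) = 0, and fix ε > 0. Suppose δ := sup_{|x| = ε} |u(x)| satisfies δ < ε. Then for every x ∈ ℝ^m, one has |x| ≤ (z(x) + ε²)/(2(ε − δ)), where z(x) := |x|² − |u(x)|². -/
open Set

theorem stmt0 (m n : ℕ)
    (u : EuclideanSpace ℝ (Fin m) → EuclideanSpace ℝ (Fin n))
    (hu : LipschitzWith 1 u) (hu0 : u 0 = 0)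
    (ε δ : ℝ) (hε : 0 < ε)
    (hδ : IsLUB {r : ℝ | ∃ x : EuclideanSpace ℝ (Fin m), ‖x‖ = ε ∧ r = ‖u x‖} δ)
    (hδε : δ < ε) :
    ∀ x : EuclideanSpace ℝ (Fin m),
      ‖x‖ ≤ ((‖x‖ ^ 2 - ‖u x‖ ^ 2) + ε ^ 2) / (2 * (ε - δ)) := by
  rcases Nat.eq_zero_or_pos m with hm | hm
  · subst hm
    exfalso
    have h1 : δ ≤ δ - 1 := hδ.2 (by
      rintro r ⟨x, hx, rfl⟩
      have : x = 0 := Subsingleton.elim x 0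
      rw [this, norm_zero] at hx
      linarith)
    linarith
  have hδ0 : 0 ≤ δ := by
    have hx0 : ‖(EuclideanSpace.single (⟨0, hm⟩ : Fin m) ε : EuclideanSpace ℝ (Fin m))‖ = ε := by
      simp [EuclideanSpace.norm_single, Real.norm_eq_abs, abs_of_pos hε]
    have := hδ.1 ⟨_, hx0, rfl⟩
    exact le_trans (norm_nonneg _) this
  intro x
  have hεδ : 0 < ε - δ := by linarith
  have hlip : ∀ a b : EuclideanSpace ℝ (Fin m), ‖u a - u b‖ ≤ ‖a - b‖ := by
    intro a b
    have := hu.dist_le_mul a b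
    simpa [dist_eq_norm] using this
  have hwR : ‖u x‖ ≤ ‖x‖ := by
    have := hlip x 0
    simpa [hu0] using this
  rcases eq_or_lt_of_le (norm_nonneg x) with hR0 | hR0
  · rw [le_div_iff₀ (by linarith)]
    nlinarith [norm_nonneg (u x), sq_nonneg ε]
  · set R := ‖x‖ with hR
    have hkey : ‖u x‖ ≤ δ + |R - ε| := by
      set y : EuclideanSpace ℝ (Fin m) := (ε / R) • x with hy
      have hyn : ‖y‖ = ε := by
        rw [hy, norm_smul, Real.norm_eq_abs, abs_of_pos (div_pos hε hR0), ← hR]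
        field_simp
      have huy : ‖u y‖ ≤ δ := hδ.1 ⟨y, hyn, rfl⟩
      have hxy : ‖x - y‖ = |R - ε| := by
        have h2 : x - y = (1 - ε / R) • x := by rw [hy]; module
        have h1 : (1 - ε / R) = (R - ε) / R := by field_simp
        rw [h2, norm_smul, Real.norm_eq_abs, ← hR, h1, abs_div, abs_of_pos hR0]
        field_simp
      calc ‖u x‖ ≤ ‖u x - u y‖ + ‖u y‖ := by
            have := norm_sub_norm_le (u x) (u y); linarith
        _ ≤ |R - ε| + δ := by
            have := hlip x y; rw [hxy] at this; linarith
        _ = δ + |R - ε| := by ring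
    rw [le_div_iff₀ (by linarith)]
    have hw0 : 0 ≤ ‖u x‖ := norm_nonneg _
    rcases abs_cases (R - ε) with ⟨habs, hsign⟩ | ⟨habs, hsign⟩ <;> rw [habs] at hkey
    · nlinarith [mul_le_mul hkey hkey hw0 (by linarith : (0:ℝ) ≤ δ + (R - ε)),
        mul_nonneg hδ0 hε.le, mul_nonneg hδ0 hεδ.le]
    · rcases le_or_gt (2 * R * (ε - δ)) (ε ^ 2) with hc | hc
      · nlinarith [mul_le_mul hwR hwR hw0 (norm_nonneg x)]
      · have hp : 0 ≤ (ε - δ) * (4 * R - 2 * ε - δ) := by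
          nlinarith [mul_nonneg hδ0 hε.le, mul_nonneg hδ0 hδ0]
        have h4 : 0 ≤ 4 * R - 2 * ε - δ := by nlinarith [hp, hεδ]
        nlinarith [mul_le_mul hkey hkey hw0 (by linarith : (0:ℝ) ≤ δ + -(R - ε)),
          mul_nonneg hδ0 h4]
end

section
/- Let F, G : (R₀, ∞) → (0, ∞) be differentiable, with F nondecreasing and positive, G nondecreasing, and suppose 4 F(R)² ≤ F'(R) · R^{−2} G'(R) for all R > R₀. Then for all R > r > R₀, one has (R² − r²)² ≤ G(R)/F(r). -/
/-!
With `u = -1/F` the hypothesis reads `(2s)² ≤ u'(s) G'(s)`. For each `t > 0`, AM-GM turns this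
into `4s ≤ G'(s)/t + t u'(s)`, so `G/t + t u - 2s²` is nondecreasing and
`2(R² - r²) ≤ (G(R) - G(r))/t + t (1/F(r) - 1/F(R)) ≤ G(R)/t + t/F(r)`.
Taking `t = F(r) √(G(R)/F(r))` gives `R² - r² ≤ √(G(R)/F(r))`. This is the pointwise form of the
Cauchy–Schwarz estimate `(∫ s ds)² ≤ ∫ s²/G' · ∫ G'`.
-/

open Set

lemma HasDerivAt.nonneg_of_monotoneOn_of_isOpen {g : ℝ → ℝ} {g' x : ℝ} {s : Set ℝ}
    (hs : IsOpen s) (hx : x ∈ s) (hd : HasDerivAt g g' x) (hg : MonotoneOn g s) : 0 ≤ g' :=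
  hd.hasDerivWithinAt.nonneg_of_monotoneOn
    (by simpa using PerfectSpace.univ_preperfect.open_inter hs x ⟨hx, mem_univ x⟩) hg

lemma two_mul_le_div_add_mul {a b c t : ℝ} (ha : 0 ≤ a) (hc : 0 < c) (ht : 0 < t)
    (h : c ^ 2 ≤ a * b) : 2 * c ≤ b / t + t * a := by
  have ha' : 0 < a := by
    rcases ha.lt_or_eq with ha | rfl
    · exact ha
    · nlinarith
  rw [div_add' _ _ _ ht.ne', le_div_iff₀ ht]
  nlinarith [sq_nonneg (t * a - c)]

lemma sq_le_div_of_forall_two_mul_le {x g f : ℝ} (hx : 0 ≤ x) (hg : 0 < g) (hf : 0 < f)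
    (h : ∀ t > 0, 2 * x ≤ g / t + t / f) : x ^ 2 ≤ g / f := by
  set y := √(g / f)
  have hy : 0 < y := Real.sqrt_pos.mpr (div_pos hg hf)
  have hy2 : y ^ 2 = g / f := Real.sq_sqrt (div_pos hg hf).le
  have hxy : 2 * x ≤ 2 * y := by
    convert h (f * y) (mul_pos hf hy) using 1
    field_simp
    rw [hy2]
    field_simp
    ring
  nlinarith

lemma sq_two_mul_le_div_sq_mul {a b f x : ℝ} (hx : x ≠ 0) (hf : f ≠ 0)
    (h : 4 * f ^ 2 ≤ a * (b / x ^ 2)) : (2 * x) ^ 2 ≤ a / f ^ 2 * b := by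
  rw [mul_div_assoc', le_div_iff₀ (by positivity)] at h
  rw [div_mul_eq_mul_div, le_div_iff₀ (by positivity)]
  linarith

lemma two_mul_sq_sub_sq_le_of_sq_le_deriv_mul_deriv {R₀ : ℝ} (hR₀ : 0 ≤ R₀) {u v u' v' : ℝ → ℝ}
    (hu : ∀ x ∈ Ioi R₀, HasDerivAt u (u' x) x) (hv : ∀ x ∈ Ioi R₀, HasDerivAt v (v' x) x)
    (hu' : ∀ x ∈ Ioi R₀, 0 ≤ u' x) (huv : ∀ x ∈ Ioi R₀, (2 * x) ^ 2 ≤ u' x * v' x)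
    {t : ℝ} (ht : 0 < t) {r R : ℝ} (hr : R₀ < r) (hrR : r ≤ R) :
    2 * (R ^ 2 - r ^ 2) ≤ (v R - v r) / t + t * (u R - u r) := by
  let Φ x := v x / t + t * u x - 2 * x ^ 2
  have hΦ : ∀ x ∈ Ioi R₀, HasDerivAt Φ (v' x / t + t * u' x - 4 * x) x := fun x hx =>
    ((((hv x hx).div_const t).add ((hu x hx).const_mul t)).sub
      ((hasDerivAt_pow 2 x).const_mul 2)).congr_deriv (by ring)
  have hΦmono : MonotoneOn Φ (Ioi R₀) := by
    refine monotoneOn_of_hasDerivWithinAt_nonneg (convex_Ioi R₀)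
      (fun x hx => (hΦ x hx).continuousAt.continuousWithinAt)
      (fun x hx => (hΦ x (interior_subset hx)).hasDerivWithinAt) fun x hx => ?_
    rw [interior_Ioi] at hx
    have := two_mul_le_div_add_mul (hu' x hx) (by linarith [mem_Ioi.mp hx]) ht (huv x hx)
    linarith
  have := hΦmono hr (hr.trans_le hrR) hrR
  simp only [Φ] at this
  rw [sub_div, mul_sub]
  linarith

theorem stmt7_general (R₀ : ℝ) (F G F' G' : ℝ → ℝ)
    (hF' : ∀ R ∈ Ioi R₀, HasDerivAt F (F' R) R)
    (hG' : ∀ R ∈ Ioi R₀, HasDerivAt G (G' R) R)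
    (hFpos : ∀ R ∈ Ioi R₀, 0 < F R)
    (hGpos : ∀ R ∈ Ioi R₀, 0 < G R)
    (hFmono : MonotoneOn F (Ioi R₀))
    (hkey : ∀ R ∈ Ioi R₀, 4 * (F R) ^ 2 ≤ F' R * (G' R / R ^ 2)) :
    ∀ r R : ℝ, R₀ < r → r < R → (R ^ 2 - r ^ 2) ^ 2 ≤ G R / F r := by
  -- at `R = 0` the hypothesis `hkey` would read `4 F(0)² ≤ 0`, because `G' 0 / 0 = 0`
  have hR₀ : 0 ≤ R₀ := by
    by_contra! h
    have h0 := hkey 0 h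
    norm_num at h0
    nlinarith [hFpos 0 h]
  have hu : ∀ x ∈ Ioi R₀, HasDerivAt (fun x => -(F x)⁻¹) (F' x / F x ^ 2) x := fun x hx =>
    ((hF' x hx).inv (hFpos x hx).ne').neg.congr_deriv (by ring)
  have hu' : ∀ x ∈ Ioi R₀, 0 ≤ F' x / F x ^ 2 := fun x hx =>
    div_nonneg ((hF' x hx).nonneg_of_monotoneOn_of_isOpen isOpen_Ioi hx hFmono) (sq_nonneg _)
  have huG : ∀ x ∈ Ioi R₀, (2 * x) ^ 2 ≤ F' x / F x ^ 2 * G' x := fun x hx =>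
    sq_two_mul_le_div_sq_mul (hR₀.trans_lt hx).ne' (hFpos x hx).ne' (hkey x hx)
  intro r R hr hrR
  have hGr := hGpos r hr
  have hFR := hFpos R (hr.trans hrR)
  refine sq_le_div_of_forall_two_mul_le (by nlinarith) (hGpos R (hr.trans hrR)) (hFpos r hr)
    fun t ht => ?_
  calc 2 * (R ^ 2 - r ^ 2) ≤ (G R - G r) / t + t * (-(F R)⁻¹ - -(F r)⁻¹) :=
        two_mul_sq_sub_sq_le_of_sq_le_deriv_mul_deriv hR₀ hu hG' hu' huG ht hr hrR.le
    _ ≤ G R / t + t / F r := by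
        rw [sub_div, div_eq_mul_inv t]
        linarith [div_pos hGr ht, mul_pos ht (inv_pos.2 hFR)]

theorem stmt7 (R₀ : ℝ) (F G F' G' : ℝ → ℝ)
    (hF' : ∀ R ∈ Ioi R₀, HasDerivAt F (F' R) R)
    (hG' : ∀ R ∈ Ioi R₀, HasDerivAt G (G' R) R)
    (hFpos : ∀ R ∈ Ioi R₀, 0 < F R)
    (hGpos : ∀ R ∈ Ioi R₀, 0 < G R)
    (hFmono : MonotoneOn F (Ioi R₀))
    (hGmono : MonotoneOn G (Ioi R₀))
    (hkey : ∀ R ∈ Ioi R₀, 4 * (F R) ^ 2 ≤ F' R * (G' R / R ^ 2)) :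
    ∀ r R : ℝ, R₀ < r → r < R → (R ^ 2 - r ^ 2) ^ 2 ≤ G R / F r :=
  stmt7_general R₀ F G F' G' hF' hG' hFpos hGpos hFmono hkey
end

section
/- Let F̃, G̃ : (1, ∞) → (0, ∞) be differentiable, F̃ positive and nondecreasing, G̃ nondecreasing, and suppose there is a constant C > 0 with F̃(R)² ≤ C² F̃'(R) · R² G̃'(R) for all R > 1. Then for all 1 < r < R, (log(R/r))² ≤ C² G̃(R)/F̃(r). Consequently, if lim_{r→∞} F̃(r) > 0, then lim sup_{R→∞} (log R)²/G̃(R) < ∞. -/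
open Set Filter Real

/-!
For every `a > 0` the function `s ↦ G s / a - a * C ^ 2 / F s - 2 * log s` is nondecreasing:
by the hypothesis, the terms `a * C ^ 2 * F' / F ^ 2 ≥ 0` and `G' / a` of its derivative have
product at least `1 / s ^ 2`, so by AM-GM their sum is at least `2 / s`. Comparing its values at
`r` and `R` gives `2 * log (R / r) ≤ a * C ^ 2 / F r + G R / a`, and the choice
`a = log (R / r) * F r / C ^ 2` turns this into the squared bound. The bound on
`log R ^ 2 / G R` is the case `r = 2`, as `log R ≤ 2 * log (R / 2)` once `R ≥ 4`.
-/

lemma two_div_le_add_of_one_le_mul_mul_sq {x y s : ℝ} (hs : 0 < s) (hx : 0 ≤ x)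
    (h : 1 ≤ x * y * s ^ 2) : 2 / s ≤ x + y := by
  have hy : 0 ≤ y := by nlinarith [mul_nonneg hx (sq_nonneg s)]
  rw [div_le_iff₀ hs]
  nlinarith [sq_nonneg ((x - y) * s), mul_nonneg (add_nonneg hx hy) hs.le]

lemma sq_le_mul_of_forall_two_mul_le {x p q : ℝ} (hx : 0 < x) (hp : 0 < p)
    (h : ∀ a > 0, 2 * x ≤ a * p + q / a) : x ^ 2 ≤ p * q := by
  have := h (x / p) (by positivity)
  rw [div_mul_cancel₀ x hp.ne', div_div_eq_mul_div, mul_comm q] at this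
  rw [sq, ← le_div_iff₀ hx]
  linarith

lemma log_le_two_mul_log_div {r R : ℝ} (hr : 0 < r) (hR : r ^ 2 ≤ R) :
    log R ≤ 2 * log (R / r) := by
  have hlog : 2 * log r ≤ log R := by
    simpa using log_le_log (pow_pos hr 2) hR
  rw [log_div ((pow_pos hr 2).trans_le hR).ne' hr.ne']
  linarith

lemma monotoneOn_div_sub_mul_inv_sub_two_mul_log {F G F' G' : ℝ → ℝ} {C a r R : ℝ}
    (ha : 0 < a) (hr : 0 < r)
    (hF : ∀ s ∈ Icc r R, HasDerivAt F (F' s) s) (hG : ∀ s ∈ Icc r R, HasDerivAt G (G' s) s)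
    (hFpos : ∀ s ∈ Icc r R, 0 < F s) (hF'nonneg : ∀ s ∈ Icc r R, 0 ≤ F' s)
    (hkey : ∀ s ∈ Icc r R, F s ^ 2 ≤ C ^ 2 * F' s * (s ^ 2 * G' s)) :
    MonotoneOn (fun s ↦ G s / a - a * C ^ 2 * (F s)⁻¹ - 2 * log s) (Icc r R) := by
  have hderiv : ∀ s ∈ Icc r R, HasDerivAt (fun s ↦ G s / a - a * C ^ 2 * (F s)⁻¹ - 2 * log s)
      (G' s / a + a * C ^ 2 * F' s / F s ^ 2 - 2 / s) s := fun s hs ↦ by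
    refine ((((hG s hs).div_const a).fun_sub (((hF s hs).fun_inv (hFpos s hs).ne').const_mul
      (a * C ^ 2))).fun_sub ((hasDerivAt_log (hr.trans_le hs.1).ne').const_mul 2)).congr_deriv ?_
    ring
  refine monotoneOn_of_hasDerivWithinAt_nonneg (convex_Icc r R)
    (fun s hs ↦ (hderiv s hs).continuousAt.continuousWithinAt)
    (fun s hs ↦ (hderiv s (interior_subset hs)).hasDerivWithinAt) fun s hs ↦ ?_
  replace hs := interior_subset hs
  have hFs := hFpos s hs
  have hprod : 1 ≤ a * C ^ 2 * F' s / F s ^ 2 * (G' s / a) * s ^ 2 := by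
    rw [show a * C ^ 2 * F' s / F s ^ 2 * (G' s / a) * s ^ 2
      = C ^ 2 * F' s * (s ^ 2 * G' s) / F s ^ 2 by field_simp, one_le_div (by positivity)]
    exact hkey s hs
  have := two_div_le_add_of_one_le_mul_mul_sq (hr.trans_le hs.1)
    (by have := hF'nonneg s hs; positivity) hprod
  linarith

lemma sq_log_div_le {F G F' G' : ℝ → ℝ} {C r R : ℝ} (hC : 0 < C) (hr : 0 < r) (hrR : r < R)
    (hF : ∀ s ∈ Icc r R, HasDerivAt F (F' s) s) (hG : ∀ s ∈ Icc r R, HasDerivAt G (G' s) s)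
    (hFpos : ∀ s ∈ Icc r R, 0 < F s) (hF'nonneg : ∀ s ∈ Icc r R, 0 ≤ F' s) (hGr : 0 ≤ G r)
    (hkey : ∀ s ∈ Icc r R, F s ^ 2 ≤ C ^ 2 * F' s * (s ^ 2 * G' s)) :
    log (R / r) ^ 2 ≤ C ^ 2 * G R / F r := by
  have hr_mem : r ∈ Icc r R := left_mem_Icc.mpr hrR.le
  have hR_mem : R ∈ Icc r R := right_mem_Icc.mpr hrR.le
  have hFr := hFpos r hr_mem
  have hFR := hFpos R hR_mem
  rw [mul_div_right_comm]
  refine sq_le_mul_of_forall_two_mul_le (log_pos ((one_lt_div hr).mpr hrR)) (by positivity)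
    fun a ha ↦ ?_
  have hmono := monotoneOn_div_sub_mul_inv_sub_two_mul_log ha hr hF hG hFpos hF'nonneg hkey
    hr_mem hR_mem hrR.le
  simp only at hmono
  rw [log_div (hr.trans hrR).ne' hr.ne']
  have hGr_div : 0 ≤ G r / a := by positivity
  have hFR_inv : 0 ≤ a * C ^ 2 * (F R)⁻¹ := by positivity
  rw [mul_div_assoc', div_eq_mul_inv (a * C ^ 2)]
  linarith

theorem stmt8_general (F G F' G' : ℝ → ℝ) (C : ℝ) (hC : 0 < C)
    (hF' : ∀ R ∈ Ioi (1 : ℝ), HasDerivAt F (F' R) R)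
    (hG' : ∀ R ∈ Ioi (1 : ℝ), HasDerivAt G (G' R) R)
    (hFpos : ∀ R ∈ Ioi (1 : ℝ), 0 < F R)
    (hGpos : ∀ R ∈ Ioi (1 : ℝ), 0 < G R)
    (hFmono : MonotoneOn F (Ioi (1 : ℝ)))
    (hkey : ∀ R ∈ Ioi (1 : ℝ), (F R) ^ 2 ≤ C ^ 2 * F' R * (R ^ 2 * G' R)) :
    (∀ r R : ℝ, 1 < r → r < R →
      (Real.log (R / r)) ^ 2 ≤ C ^ 2 * G R / F r) ∧
    ∃ M : ℝ, ∀ᶠ R : ℝ in atTop, (Real.log R) ^ 2 / G R ≤ M := by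
  have hF'nonneg : ∀ s ∈ Ioi (1 : ℝ), 0 ≤ F' s := fun s hs ↦
    (hF' s hs).hasDerivWithinAt.nonneg_of_monotoneOn (isOpen_Ioi.preperfect s hs) hFmono
  have log_bound : ∀ r R : ℝ, 1 < r → r < R → log (R / r) ^ 2 ≤ C ^ 2 * G R / F r := by
    intro r R hr hrR
    have hIcc : Icc r R ⊆ Ioi 1 := fun s hs ↦ hr.trans_le hs.1
    exact sq_log_div_le hC (one_pos.trans hr) hrR (fun s hs ↦ hF' s (hIcc hs))
      (fun s hs ↦ hG' s (hIcc hs)) (fun s hs ↦ hFpos s (hIcc hs))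
      (fun s hs ↦ hF'nonneg s (hIcc hs)) (hGpos r hr).le (fun s hs ↦ hkey s (hIcc hs))
  refine ⟨log_bound, 4 * C ^ 2 / F 2, ?_⟩
  filter_upwards [eventually_ge_atTop 4] with R hR
  have hGR : 0 < G R := hGpos R (by norm_num; linarith)
  have hlog : log R ≤ 2 * log (R / 2) := log_le_two_mul_log_div two_pos (by linarith)
  have hlog_nonneg : 0 ≤ log R := log_nonneg (by linarith)
  rw [div_le_iff₀ hGR]
  calc log R ^ 2 ≤ 4 * log (R / 2) ^ 2 := by nlinarith
    _ ≤ 4 * (C ^ 2 * G R / F 2) := by gcongr; exact log_bound 2 R one_lt_two (by linarith)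
    _ = 4 * C ^ 2 / F 2 * G R := by ring

theorem stmt8 (F G F' G' : ℝ → ℝ) (C : ℝ) (hC : 0 < C)
    (hF' : ∀ R ∈ Ioi (1 : ℝ), HasDerivAt F (F' R) R)
    (hG' : ∀ R ∈ Ioi (1 : ℝ), HasDerivAt G (G' R) R)
    (hFpos : ∀ R ∈ Ioi (1 : ℝ), 0 < F R)
    (hGpos : ∀ R ∈ Ioi (1 : ℝ), 0 < G R)
    (hFmono : MonotoneOn F (Ioi (1 : ℝ)))
    (hGmono : MonotoneOn G (Ioi (1 : ℝ)))
    (hkey : ∀ R ∈ Ioi (1 : ℝ), (F R) ^ 2 ≤ C ^ 2 * F' R * (R ^ 2 * G' R)) :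
    (∀ r R : ℝ, 1 < r → r < R →
      (Real.log (R / r)) ^ 2 ≤ C ^ 2 * G R / F r) ∧
    ∃ M : ℝ, ∀ᶠ R : ℝ in atTop, (Real.log R) ^ 2 / G R ≤ M :=
  stmt8_general F G F' G' C hC hF' hG' hFpos hGpos hFmono hkey
end

section
/- Let a < 0 and b ∈ (−1, 1). Consider the initial value problem w'' = (1/2)(t w' − w)(1 − (w')²), w(0) = a, w'(0) = b. Along any solution with |w'| < 1, the function φ(t) := t w'(t) − w(t) satisfies φ'(t) = (t/2)(1 − (w'(t))²) φ(t); hence φ(t) = φ(0) e^{f(t)} where f(t) := ∫_0^t (s/2)(1 − (w'(s))²) ds ≥ 0, and in particular φ(t) ≥ −a > 0 for all t in the existence interval. -/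
open Set intervalIntegral

theorem eq_mul_exp_integral_of_hasDerivAt {φ g : ℝ → ℝ} {s : Set ℝ} (hs : IsOpen s)
    (hs' : s.OrdConnected) (hg : ContinuousOn g s) (hφ : ∀ t ∈ s, HasDerivAt φ (g t * φ t) t)
    {t₀ t : ℝ} (ht₀ : t₀ ∈ s) (ht : t ∈ s) :
    φ t = φ t₀ * Real.exp (∫ u in t₀..t, g u) := by
  set F : ℝ → ℝ := fun t => ∫ u in t₀..t, g u
  have hF : ∀ t ∈ s, HasDerivAt F (g t) t := fun t ht =>
    integral_hasDerivAt_right ((hg.mono (hs'.uIcc_subset ht₀ ht)).intervalIntegrable)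
      (hg.stronglyMeasurableAtFilter hs t ht) (hg.continuousAt (hs.mem_nhds ht))
  have hψ : ∀ t ∈ s, HasDerivAt (fun t => φ t * Real.exp (-F t)) 0 t := fun t ht =>
    ((hφ t ht).mul (hF t ht).neg.exp).congr_deriv (by ring)
  have hconst : φ t * Real.exp (-F t) = φ t₀ * Real.exp (-F t₀) :=
    hs.is_const_of_deriv_eq_zero hs'.isPreconnected
      (fun t ht => (hψ t ht).differentiableAt.differentiableWithinAt)
      (fun t ht => (hψ t ht).deriv) ht ht₀
  have hF₀ : F t₀ = 0 := integral_same
  rw [hF₀, neg_zero, Real.exp_zero, mul_one, Real.exp_neg, ← div_eq_mul_inv,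
    div_eq_iff (Real.exp_pos _).ne'] at hconst
  exact hconst

theorem integral_mul_nonneg_of_nonneg {k : ℝ → ℝ} {t : ℝ} (hk : ∀ s ∈ uIcc 0 t, 0 ≤ k s) :
    0 ≤ ∫ s in (0 : ℝ)..t, s * k s := by
  rcases le_total 0 t with ht | ht
  · refine integral_nonneg ht fun s hs => mul_nonneg hs.1 (hk s ?_)
    rwa [uIcc_of_le ht]
  · rw [integral_symm, ← integral_neg]
    refine integral_nonneg ht fun s hs => ?_
    rw [neg_mul_eq_neg_mul]
    refine mul_nonneg (neg_nonneg.2 hs.2) (hk s ?_)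
    rwa [uIcc_of_ge ht]

theorem hasDerivAt_mul_deriv_sub {w dw : ℝ → ℝ} {t : ℝ} (hw : HasDerivAt w (dw t) t)
    (hdw : HasDerivAt dw ((1 / 2) * (t * dw t - w t) * (1 - (dw t) ^ 2)) t) :
    HasDerivAt (fun t => t * dw t - w t) ((t / 2) * (1 - (dw t) ^ 2) * (t * dw t - w t)) t :=
  (((hasDerivAt_id t).mul hdw).sub hw).congr_deriv (by simp only [id_eq]; ring)

theorem stmt10_general (a T₁ T₂ : ℝ) (ha : a < 0)
    (hT₁ : T₁ < 0) (hT₂ : 0 < T₂)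
    (w dw : ℝ → ℝ)
    (hw : ∀ t ∈ Set.Ioo T₁ T₂, HasDerivAt w (dw t) t)
    (hODE : ∀ t ∈ Set.Ioo T₁ T₂,
      HasDerivAt dw ((1 / 2) * (t * dw t - w t) * (1 - (dw t) ^ 2)) t)
    (hspace : ∀ t ∈ Set.Ioo T₁ T₂, |dw t| < 1)
    (hw0 : w 0 = a) :
    (∀ t ∈ Set.Ioo T₁ T₂,
      HasDerivAt (fun t => t * dw t - w t)
        ((t / 2) * (1 - (dw t) ^ 2) * (t * dw t - w t)) t) ∧
    (∀ t ∈ Set.Ioo T₁ T₂,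
      t * dw t - w t =
        (0 * dw 0 - w 0) *
          Real.exp (∫ s in (0 : ℝ)..t, (s / 2) * (1 - (dw s) ^ 2))) ∧
    (∀ t ∈ Set.Ioo T₁ T₂, 0 ≤ ∫ s in (0 : ℝ)..t, (s / 2) * (1 - (dw s) ^ 2)) ∧
    (∀ t ∈ Set.Ioo T₁ T₂, -a ≤ t * dw t - w t) := by
  have h0 : (0 : ℝ) ∈ Ioo T₁ T₂ := ⟨hT₁, hT₂⟩
  have hφ' := fun t ht => hasDerivAt_mul_deriv_sub (hw t ht) (hODE t ht)
  have hg : ContinuousOn (fun s => (s / 2) * (1 - (dw s) ^ 2)) (Ioo T₁ T₂) :=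
    (continuousOn_id.div_const 2).mul <| continuousOn_const.sub <|
      (continuousOn_of_forall_continuousAt fun t ht => (hODE t ht).continuousAt).pow 2
  have hφ : ∀ t ∈ Ioo T₁ T₂, _ := fun t ht =>
    eq_mul_exp_integral_of_hasDerivAt isOpen_Ioo ordConnected_Ioo hg hφ' h0 ht
  have hf : ∀ t ∈ Ioo T₁ T₂, 0 ≤ ∫ s in (0 : ℝ)..t, (s / 2) * (1 - (dw s) ^ 2) := by
    intro t ht
    have hk : ∀ s ∈ uIcc 0 t, 0 ≤ (1 - (dw s) ^ 2) / 2 := fun s hs => by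
      have := (sq_lt_one_iff_abs_lt_one _).2 (hspace s (ordConnected_Ioo.uIcc_subset h0 ht hs))
      linarith
    simpa only [div_mul_eq_mul_div, mul_div_assoc] using integral_mul_nonneg_of_nonneg hk
  refine ⟨hφ', hφ, hf, fun t ht => ?_⟩
  rw [hφ t ht, hw0, zero_mul, zero_sub]
  exact le_mul_of_one_le_right (by linarith) (Real.one_le_exp (hf t ht))

theorem stmt10 (a b T₁ T₂ : ℝ) (ha : a < 0) (hb : b ∈ Set.Ioo (-1 : ℝ) 1)
    (hT₁ : T₁ < 0) (hT₂ : 0 < T₂)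
    (w dw : ℝ → ℝ)
    (hw : ∀ t ∈ Set.Ioo T₁ T₂, HasDerivAt w (dw t) t)
    (hODE : ∀ t ∈ Set.Ioo T₁ T₂,
      HasDerivAt dw ((1 / 2) * (t * dw t - w t) * (1 - (dw t) ^ 2)) t)
    (hspace : ∀ t ∈ Set.Ioo T₁ T₂, |dw t| < 1)
    (hw0 : w 0 = a) (hdw0 : dw 0 = b) :
    (∀ t ∈ Set.Ioo T₁ T₂,
      HasDerivAt (fun t => t * dw t - w t)
        ((t / 2) * (1 - (dw t) ^ 2) * (t * dw t - w t)) t) ∧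
    (∀ t ∈ Set.Ioo T₁ T₂,
      t * dw t - w t =
        (0 * dw 0 - w 0) *
          Real.exp (∫ s in (0 : ℝ)..t, (s / 2) * (1 - (dw s) ^ 2))) ∧
    (∀ t ∈ Set.Ioo T₁ T₂, 0 ≤ ∫ s in (0 : ℝ)..t, (s / 2) * (1 - (dw s) ^ 2)) ∧
    (∀ t ∈ Set.Ioo T₁ T₂, -a ≤ t * dw t - w t) :=
  stmt10_general a T₁ T₂ ha hT₁ hT₂ w dw hw hODE hspace hw0
end

section
/- Let a < 0, b ∈ (−1,1), and let w solve w'' = (1/2)(tw' − w)(1 − (w')²) with w(0) = a, w'(0) = b on a maximal interval where |w'| < 1. Suppose tw'(t) − w(t) ≥ −a for all t ≥ 0 in the existence interval. Then (tanh⁻¹ w')'(t) = (1/2)(tw'(t) − w(t)) ≥ −a/2, hence w'(t) ≥ tanh(−(a/2)t + tanh⁻¹ b) for all t ≥ 0 in the existence interval. -/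
open Set

/-- The inverse hyperbolic tangent on `(-1, 1)`. -/
noncomputable def artanh (x : ℝ) : ℝ := (1 / 2) * Real.log ((1 + x) / (1 - x))

lemma artanh_eq_real_artanh {x : ℝ} (hx : x ∈ Ioo (-1) 1) : artanh x = Real.artanh x :=
  (Real.artanh_eq_half_log (Ioo_subset_Icc_self hx)).symm

lemma hasDerivAt_artanh {x : ℝ} (hx : x ∈ Ioo (-1) 1) :
    HasDerivAt artanh (1 - x ^ 2)⁻¹ x := by
  obtain ⟨hx₁, hx₂⟩ := hx
  have hquot : HasDerivAt (fun y : ℝ => (1 + y) / (1 - y))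
      ((1 * (1 - x) - (1 + x) * (-1)) / (1 - x) ^ 2) x :=
    ((hasDerivAt_id x).const_add 1).div ((hasDerivAt_id x).const_sub 1) (by linarith)
  refine ((hquot.log (div_pos (by linarith) (by linarith)).ne').const_mul (1 / 2)).congr_deriv ?_
  have : 1 - x ≠ 0 := by linarith
  have : 1 + x ≠ 0 := by linarith
  have : 1 - x ^ 2 ≠ 0 := by nlinarith
  field_simp
  ring

lemma HasDerivAt.artanh_of_eq_mul_one_sub_sq {u : ℝ → ℝ} {φ t : ℝ}
    (hu : HasDerivAt u (φ * (1 - u t ^ 2)) t) (ht : u t ∈ Ioo (-1) 1) :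
    HasDerivAt (fun s => artanh (u s)) φ t := by
  have : 1 - u t ^ 2 ≠ 0 := by nlinarith [ht.1, ht.2]
  exact ((hasDerivAt_artanh ht).comp t hu).congr_deriv (by field_simp)

lemma Real.tanh_le_of_le_artanh {c x : ℝ} (hx : x ∈ Ioo (-1) 1) (h : c ≤ Real.artanh x) :
    Real.tanh c ≤ x := by
  rwa [← Real.artanh_le_artanh_iff ⟨Real.neg_one_lt_tanh c, Real.tanh_lt_one c⟩ hx,
    Real.artanh_tanh]

lemma Convex.add_mul_sub_le_of_le_hasDerivAt {D : Set ℝ} (hD : Convex ℝ D) {g g' : ℝ → ℝ}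
    {C : ℝ} (hg : ∀ t ∈ D, HasDerivAt g (g' t) t) (hC : ∀ t ∈ D, C ≤ g' t)
    {x y : ℝ} (hx : x ∈ D) (hy : y ∈ D) (hxy : x ≤ y) : g x + C * (y - x) ≤ g y := by
  have hint : ∀ t ∈ interior D, t ∈ D := fun t ht => interior_subset ht
  have := hD.mul_sub_le_image_sub_of_le_deriv
    (fun t ht => (hg t ht).continuousAt.continuousWithinAt)
    (fun t ht => (hg t (hint t ht)).differentiableAt.differentiableWithinAt)
    (fun t ht => (hg t (hint t ht)).deriv ▸ hC t (hint t ht)) x hx y hy hxy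
  linarith

theorem stmt11_general (a b T₂ : ℝ)
    (w dw : ℝ → ℝ)
    (hODE : ∀ t ∈ Set.Ico (0 : ℝ) T₂,
      HasDerivAt dw ((1 / 2) * (t * dw t - w t) * (1 - (dw t) ^ 2)) t)
    (hspace : ∀ t ∈ Set.Ico (0 : ℝ) T₂, |dw t| < 1)
    (hdw0 : dw 0 = b)
    (hphi : ∀ t ∈ Set.Ico (0 : ℝ) T₂, -a ≤ t * dw t - w t) :
    (∀ t ∈ Set.Ico (0 : ℝ) T₂,
      HasDerivAt (fun s => artanh (dw s)) ((1 / 2) * (t * dw t - w t)) t ∧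
      -a / 2 ≤ (1 / 2) * (t * dw t - w t)) ∧
    (∀ t ∈ Set.Ico (0 : ℝ) T₂,
      Real.tanh (-(a / 2) * t + artanh b) ≤ dw t) := by
  have hdw_mem : ∀ t ∈ Ico (0 : ℝ) T₂, dw t ∈ Ioo (-1) 1 := fun t ht => abs_lt.mp (hspace t ht)
  have hderiv : ∀ t ∈ Ico (0 : ℝ) T₂,
      HasDerivAt (fun s => artanh (dw s)) ((1 / 2) * (t * dw t - w t)) t :=
    fun t ht => (hODE t ht).artanh_of_eq_mul_one_sub_sq (hdw_mem t ht)
  have hslope : ∀ t ∈ Ico (0 : ℝ) T₂, -a / 2 ≤ (1 / 2) * (t * dw t - w t) :=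
    fun t ht => by linarith [hphi t ht]
  refine ⟨fun t ht => ⟨hderiv t ht, hslope t ht⟩, fun t ht => ?_⟩
  have h0 : (0 : ℝ) ∈ Ico 0 T₂ := ⟨le_rfl, ht.1.trans_lt ht.2⟩
  have hgrowth := (convex_Ico 0 T₂).add_mul_sub_le_of_le_hasDerivAt hderiv hslope h0 ht ht.1
  rw [hdw0, artanh_eq_real_artanh (hdw0 ▸ hdw_mem 0 h0),
    artanh_eq_real_artanh (hdw_mem t ht)] at hgrowth
  rw [artanh_eq_real_artanh (hdw0 ▸ hdw_mem 0 h0)]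
  exact Real.tanh_le_of_le_artanh (hdw_mem t ht) (by linarith)

theorem stmt11 (a b T₂ : ℝ) (ha : a < 0) (hb : b ∈ Set.Ioo (-1 : ℝ) 1)
    (hT₂ : 0 < T₂)
    (w dw : ℝ → ℝ)
    (hw : ∀ t ∈ Set.Ico (0 : ℝ) T₂, HasDerivAt w (dw t) t)
    (hODE : ∀ t ∈ Set.Ico (0 : ℝ) T₂,
      HasDerivAt dw ((1 / 2) * (t * dw t - w t) * (1 - (dw t) ^ 2)) t)
    (hspace : ∀ t ∈ Set.Ico (0 : ℝ) T₂, |dw t| < 1)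
    (hw0 : w 0 = a) (hdw0 : dw 0 = b)
    (hphi : ∀ t ∈ Set.Ico (0 : ℝ) T₂, -a ≤ t * dw t - w t) :
    (∀ t ∈ Set.Ico (0 : ℝ) T₂,
      HasDerivAt (fun s => artanh (dw s)) ((1 / 2) * (t * dw t - w t)) t ∧
      -a / 2 ≤ (1 / 2) * (t * dw t - w t)) ∧
    (∀ t ∈ Set.Ico (0 : ℝ) T₂,
      Real.tanh (-(a / 2) * t + artanh b) ≤ dw t) :=
  stmt11_general a b T₂ w dw hODE hspace hdw0 hphi
end
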